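/- (Integral estimates (22)–(23).) Let N ≥ 2 and let f : ℝ → ℝ be continuous with primitive F(u) := ∫₀ᵘ f(s) ds. Let 0 < β₁ < β₂ be such that ϱ₀ := F(β₂) − sup{F(s) : s ∈ [0,β₁]} > 0. For ρ > 2β₂ define w_ρ : [0,ρ] → ℝ by w_ρ(r) = β₂ on [0, ρ−2β₂] and w_ρ(r) = (ρ−r)/2 on [ρ−2β₂, ρ]. Then for every function v : [0,ρ] → ℝ with 0 ≤ v(r) ≤ β₁ for all r: ∫₀^ρ r^{N−1} F(w_ρ(r)) dr − ∫₀^ρ r^{N−1} F(v(r)) dr ≥ ϱ₀·ρᴺ/N − 2·(sup_{s∈[0,β₂]} |F(s)|)·(ρᴺ − (ρ−2β₂)ᴺ)/N. In particular, there exist ρ₀ > 2β₂ and σ₁ > 0 such that for each ρ > ρ₀ the left-hand side exceeds σ₁ for all such v. -/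
import Mathlib


open Set Filter

/-- The plateau function `w_ρ`: equal to `β₂` on `[0, ρ-2β₂]` and to `(ρ-r)/2` on `[ρ-2β₂, ρ]`. -/
noncomputable def plateau (b ρ : ℝ) : ℝ → ℝ :=
  fun r => if r ≤ ρ - 2 * b then b else (ρ - r) / 2

open MeasureTheory

lemma my_pow_sub_pow_le {a b : ℝ} (hb : 0 ≤ b) (hab : b ≤ a) :
    ∀ n : ℕ, a ^ n - b ^ n ≤ n * a ^ (n - 1) * (a - b)
  | 0 => by simp
  | 1 => by simp
  | (n+2) => by
      have ha : 0 ≤ a := hb.trans hab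
      have ih := my_pow_sub_pow_le hb hab (n+1)
      simp only [Nat.add_sub_cancel] at ih ⊢
      have h1 : b ^ (n+1) ≤ a ^ (n+1) := pow_le_pow_left₀ hb hab _
      have h2 : a * (a^(n+1) - b^(n+1)) ≤ a * ((↑(n+1)) * a^n * (a-b)) :=
        mul_le_mul_of_nonneg_left ih ha
      have h3 : (a - b) * b^(n+1) ≤ (a - b) * a^(n+1) :=
        mul_le_mul_of_nonneg_left h1 (by linarith)
      have e : a ^ (n+2) - b^(n+2) = a * (a^(n+1) - b^(n+1)) + (a - b) * b^(n+1) := by ring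
      have e2 : a * ((↑(n+1) : ℝ) * a^n * (a-b)) + (a-b) * a^(n+1)
          = (↑(n+2) : ℝ) * a^(n+1) * (a-b) := by push_cast; ring
      push_cast at h2 e2 ⊢
      linarith

lemma aux_main (N : ℕ) (hN : 2 ≤ N)
    (f : ℝ → ℝ) (hf : Continuous f)
    (β₁ β₂ : ℝ) (hβ₁ : 0 < β₁) (hβ₁₂ : β₁ < β₂)
    (ρ : ℝ) (hρ : 2 * β₂ < ρ) (v : ℝ → ℝ) (hv : Measurable v)
    (hvb : ∀ r ∈ Set.Icc (0:ℝ) ρ, 0 ≤ v r ∧ v r ≤ β₁) :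
    ((∫ s in (0:ℝ)..β₂, f s) -
        sSup ((fun u => ∫ s in (0:ℝ)..u, f s) '' Set.Icc 0 β₁)) * ρ ^ N / N -
      2 * sSup ((fun u => |∫ s in (0:ℝ)..u, f s|) '' Set.Icc 0 β₂) *
        (ρ ^ N - (ρ - 2 * β₂) ^ N) / N ≤
    (∫ r in (0:ℝ)..ρ, r ^ (N - 1) * ∫ s in (0:ℝ)..(plateau β₂ ρ r), f s) -
      ∫ r in (0:ℝ)..ρ, r ^ (N - 1) * ∫ s in (0:ℝ)..(v r), f s := by
  have hβ₂ : 0 < β₂ := hβ₁.trans hβ₁₂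
  have ha0 : 0 ≤ ρ - 2 * β₂ := by linarith
  have hρ0 : 0 < ρ := by linarith
  have haρ : ρ - 2 * β₂ ≤ ρ := by linarith
  set a := ρ - 2 * β₂ with ha_def
  have hNn : N - 1 + 1 = N := by omega
  have hcast : ((N - 1 : ℕ) : ℝ) + 1 = (N : ℝ) := by rw [← Nat.cast_add_one, hNn]
  have hN0 : (0:ℝ) < N := by positivity
  -- the primitive
  have hFc : Continuous fun u => ∫ s in (0:ℝ)..u, f s :=
    intervalIntegral.continuous_primitive (fun a b => hf.intervalIntegrable a b) 0
  set M₁ := sSup ((fun u => ∫ s in (0:ℝ)..u, f s) '' Set.Icc 0 β₁) with hM₁def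
  set M₂ := sSup ((fun u => |∫ s in (0:ℝ)..u, f s|) '' Set.Icc 0 β₂) with hM₂def
  have hbdd₁ : BddAbove ((fun u => ∫ s in (0:ℝ)..u, f s) '' Set.Icc 0 β₁) :=
    (isCompact_Icc.image hFc).bddAbove
  have hbdd₂ : BddAbove ((fun u => |∫ s in (0:ℝ)..u, f s|) '' Set.Icc 0 β₂) :=
    (isCompact_Icc.image hFc.abs).bddAbove
  have hFle : ∀ u ∈ Set.Icc (0:ℝ) β₁, (∫ s in (0:ℝ)..u, f s) ≤ M₁ :=
    fun u hu => le_csSup hbdd₁ ⟨u, hu, rfl⟩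
  have hFabs : ∀ u ∈ Set.Icc (0:ℝ) β₂, |∫ s in (0:ℝ)..u, f s| ≤ M₂ :=
    fun u hu => le_csSup hbdd₂ ⟨u, hu, rfl⟩
  have hM₂0 : 0 ≤ M₂ := le_trans (abs_nonneg _) (hFabs 0 ⟨le_refl _, hβ₂.le⟩)
  have hFβ₂M₂ : (∫ s in (0:ℝ)..β₂, f s) ≤ M₂ :=
    (le_abs_self _).trans (hFabs β₂ ⟨hβ₂.le, le_refl _⟩)
  -- power integral values
  have hpow : ∀ c d : ℝ, ∫ x in c..d, x ^ (N - 1) = (d ^ N - c ^ N) / N := by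
    intro c d
    rw [integral_pow, hNn, hcast]
  -- integrability of the v-integrand
  have hmeas : Measurable (fun r => r ^ (N - 1) * ∫ s in (0:ℝ)..(v r), f s) :=
    (measurable_id.pow_const (N - 1)).mul (hFc.measurable.comp hv)
  have h_int_v : IntervalIntegrable (fun r => r ^ (N - 1) * ∫ s in (0:ℝ)..(v r), f s)
      volume 0 ρ := by
    rw [intervalIntegrable_iff, uIoc_of_le hρ0.le]
    apply MeasureTheory.Integrable.mono' (integrable_const (ρ ^ (N - 1) * M₂))
      hmeas.aestronglyMeasurable
    filter_upwards [ae_restrict_mem measurableSet_Ioc] with r hr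
    obtain ⟨hv0, hv1⟩ := hvb r ⟨hr.1.le, hr.2⟩
    have hFv : |∫ s in (0:ℝ)..(v r), f s| ≤ M₂ :=
      hFabs _ ⟨hv0, hv1.trans hβ₁₂.le⟩
    rw [Real.norm_eq_abs, abs_mul, abs_pow]
    exact mul_le_mul (pow_le_pow_left₀ (abs_nonneg r)
        (by rw [abs_of_pos hr.1]; exact hr.2) _)
      hFv (abs_nonneg _) (pow_nonneg hρ0.le _)
  -- upper bound for the v-integral
  have key1 : (∫ r in (0:ℝ)..ρ, r ^ (N - 1) * ∫ s in (0:ℝ)..(v r), f s) ≤ ρ ^ N / N * M₁ := by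
    have hle : ∫ r in (0:ℝ)..ρ, r ^ (N - 1) * ∫ s in (0:ℝ)..(v r), f s
        ≤ ∫ r in (0:ℝ)..ρ, r ^ (N - 1) * M₁ := by
      apply intervalIntegral.integral_mono_on hρ0.le h_int_v
        (((continuous_pow (N - 1)).mul continuous_const).intervalIntegrable _ _)
      intro r hr
      exact mul_le_mul_of_nonneg_left (hFle _ ⟨(hvb r hr).1, (hvb r hr).2⟩)
        (pow_nonneg hr.1 (N - 1))
    calc (∫ r in (0:ℝ)..ρ, r ^ (N - 1) * ∫ s in (0:ℝ)..(v r), f s)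
        ≤ ∫ r in (0:ℝ)..ρ, r ^ (N - 1) * M₁ := hle
      _ = ρ ^ N / N * M₁ := by
          rw [intervalIntegral.integral_mul_const, hpow]
          rw [show ((0:ℝ) ^ N) = 0 from zero_pow (by omega)]
          ring_nf
  -- plateau is continuous
  have hw_cont : Continuous (plateau β₂ ρ) := by
    apply Continuous.if_le continuous_const (by fun_prop) continuous_id continuous_const
    intro x hx
    simp only [id_eq] at hx
    subst hx
    ring
  have hw_mem : ∀ r ∈ Set.Icc a ρ, plateau β₂ ρ r ∈ Set.Icc (0:ℝ) β₂ := by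
    intro r hr
    unfold plateau
    split_ifs with h
    · exact ⟨hβ₂.le, le_refl _⟩
    · exact ⟨by linarith [hr.2], by linarith [hr.1, ha_def]⟩
  -- plateau integrand is continuous
  have hP_cont : Continuous (fun r => r ^ (N - 1) * ∫ s in (0:ℝ)..(plateau β₂ ρ r), f s) :=
    (continuous_pow (N - 1)).mul (hFc.comp hw_cont)
  have hsplit : (∫ r in (0:ℝ)..ρ, r ^ (N - 1) * ∫ s in (0:ℝ)..(plateau β₂ ρ r), f s)
      = (∫ r in (0:ℝ)..a, r ^ (N - 1) * ∫ s in (0:ℝ)..(plateau β₂ ρ r), f s)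
        + ∫ r in a..ρ, r ^ (N - 1) * ∫ s in (0:ℝ)..(plateau β₂ ρ r), f s :=
    (intervalIntegral.integral_add_adjacent_intervals
      (hP_cont.intervalIntegrable _ _) (hP_cont.intervalIntegrable _ _)).symm
  have hfirst : (∫ r in (0:ℝ)..a, r ^ (N - 1) * ∫ s in (0:ℝ)..(plateau β₂ ρ r), f s)
      = a ^ N / N * (∫ s in (0:ℝ)..β₂, f s) := by
    have heq : Set.EqOn (fun r => r ^ (N - 1) * ∫ s in (0:ℝ)..(plateau β₂ ρ r), f s)
        (fun r => r ^ (N - 1) * ∫ s in (0:ℝ)..β₂, f s) (Set.uIcc 0 a) := by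
      intro r hr
      rw [uIcc_of_le ha0] at hr
      have : plateau β₂ ρ r = β₂ := by
        unfold plateau
        rw [if_pos (by linarith [hr.2, ha_def])]
      simp only [this]
    rw [intervalIntegral.integral_congr heq, intervalIntegral.integral_mul_const, hpow,
      show ((0:ℝ) ^ N) = 0 from zero_pow (by omega)]
    ring
  have hsecond : -(M₂ * ((ρ ^ N - a ^ N) / N))
      ≤ ∫ r in a..ρ, r ^ (N - 1) * ∫ s in (0:ℝ)..(plateau β₂ ρ r), f s := by
    have hle : (∫ r in a..ρ, r ^ (N - 1) * (-M₂))
        ≤ ∫ r in a..ρ, r ^ (N - 1) * ∫ s in (0:ℝ)..(plateau β₂ ρ r), f s := by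
      apply intervalIntegral.integral_mono_on haρ
        (((continuous_pow (N - 1)).mul continuous_const).intervalIntegrable _ _)
        (hP_cont.intervalIntegrable _ _)
      intro r hr
      refine mul_le_mul_of_nonneg_left ?_ (pow_nonneg (ha0.trans hr.1) (N - 1))
      exact (abs_le.mp (hFabs _ (hw_mem r hr))).1
    calc -(M₂ * ((ρ ^ N - a ^ N) / N))
        = (∫ r in a..ρ, r ^ (N - 1) * (-M₂)) := by
          rw [intervalIntegral.integral_mul_const, hpow]; ring
      _ ≤ _ := hle
  have hΔ : 0 ≤ ρ ^ N - a ^ N := sub_nonneg.2 (pow_le_pow_left₀ ha0 haρ N)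
  have harith : ((∫ s in (0:ℝ)..β₂, f s) - M₁) * ρ ^ N - 2 * M₂ * (ρ ^ N - a ^ N)
      ≤ (∫ s in (0:ℝ)..β₂, f s) * a ^ N - M₂ * (ρ ^ N - a ^ N) - M₁ * ρ ^ N := by
    nlinarith [mul_le_mul_of_nonneg_right hFβ₂M₂ hΔ]
  calc ((∫ s in (0:ℝ)..β₂, f s) - M₁) * ρ ^ N / N - 2 * M₂ * (ρ ^ N - a ^ N) / N
      = (((∫ s in (0:ℝ)..β₂, f s) - M₁) * ρ ^ N - 2 * M₂ * (ρ ^ N - a ^ N)) / N := by ring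
    _ ≤ ((∫ s in (0:ℝ)..β₂, f s) * a ^ N - M₂ * (ρ ^ N - a ^ N) - M₁ * ρ ^ N) / N := by
        gcongr
    _ = a ^ N / N * (∫ s in (0:ℝ)..β₂, f s) + (-(M₂ * ((ρ ^ N - a ^ N) / N)))
        - ρ ^ N / N * M₁ := by ring
    _ ≤ _ := by
        rw [hsplit, hfirst]
        linarith [key1, hsecond]

/-- integral estimates (22)–(23): with
`ϱ₀ = F(β₂) - sup_{[0,β₁]} F > 0`, for every `v` with `0 ≤ v ≤ β₁`,
`∫₀^ρ r^{N-1}F(w_ρ) - ∫₀^ρ r^{N-1}F(v) ≥ ϱ₀ ρᴺ/N - 2 (sup_{[0,β₂]}|F|)(ρᴺ-(ρ-2β₂)ᴺ)/N`;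
in particular for large `ρ` the difference exceeds a fixed `σ₁ > 0`. -/
theorem integral_estimates
    (N : ℕ) (hN : 2 ≤ N)
    (f : ℝ → ℝ) (hf : Continuous f)
    (β₁ β₂ : ℝ) (hβ₁ : 0 < β₁) (hβ₁₂ : β₁ < β₂)
    (hϱ : 0 < (∫ s in (0:ℝ)..β₂, f s) -
      sSup ((fun u => ∫ s in (0:ℝ)..u, f s) '' Set.Icc 0 β₁)) :
    (∀ ρ, 2 * β₂ < ρ → ∀ v : ℝ → ℝ, Measurable v →
      (∀ r ∈ Set.Icc (0:ℝ) ρ, 0 ≤ v r ∧ v r ≤ β₁) →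
      ((∫ s in (0:ℝ)..β₂, f s) -
          sSup ((fun u => ∫ s in (0:ℝ)..u, f s) '' Set.Icc 0 β₁)) * ρ ^ N / N -
        2 * sSup ((fun u => |∫ s in (0:ℝ)..u, f s|) '' Set.Icc 0 β₂) *
          (ρ ^ N - (ρ - 2 * β₂) ^ N) / N ≤
      (∫ r in (0:ℝ)..ρ, r ^ (N - 1) * ∫ s in (0:ℝ)..(plateau β₂ ρ r), f s) -
        ∫ r in (0:ℝ)..ρ, r ^ (N - 1) * ∫ s in (0:ℝ)..(v r), f s) ∧
    ∃ ρ₀ > 2 * β₂, ∃ σ₁ > (0:ℝ), ∀ ρ > ρ₀, ∀ v : ℝ → ℝ, Measurable v →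
      (∀ r ∈ Set.Icc (0:ℝ) ρ, 0 ≤ v r ∧ v r ≤ β₁) →
      σ₁ < (∫ r in (0:ℝ)..ρ, r ^ (N - 1) * ∫ s in (0:ℝ)..(plateau β₂ ρ r), f s) -
        ∫ r in (0:ℝ)..ρ, r ^ (N - 1) * ∫ s in (0:ℝ)..(v r), f s := by
  have hβ₂ : 0 < β₂ := hβ₁.trans hβ₁₂
  set ϱ := (∫ s in (0:ℝ)..β₂, f s) -
      sSup ((fun u => ∫ s in (0:ℝ)..u, f s) '' Set.Icc 0 β₁) with hϱdef
  set M₂ := sSup ((fun u => |∫ s in (0:ℝ)..u, f s|) '' Set.Icc 0 β₂) with hM₂def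
  have hFc : Continuous fun u => ∫ s in (0:ℝ)..u, f s :=
    intervalIntegral.continuous_primitive (fun a b => hf.intervalIntegrable a b) 0
  have hbdd₂ : BddAbove ((fun u => |∫ s in (0:ℝ)..u, f s|) '' Set.Icc 0 β₂) :=
    (isCompact_Icc.image hFc.abs).bddAbove
  have hM₂0 : (0:ℝ) ≤ M₂ :=
    le_trans (abs_nonneg _) (le_csSup hbdd₂ ⟨0, ⟨le_refl _, hβ₂.le⟩, rfl⟩)
  have hN0 : (0:ℝ) < N := by positivity
  have hNn : N - 1 + 1 = N := by omega
  refine ⟨fun ρ hρ v hv hvb => aux_main N hN f hf β₁ β₂ hβ₁ hβ₁₂ ρ hρ v hv hvb, ?_⟩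
  refine ⟨max (2 * β₂ + 1) ((N : ℝ) * (4 * M₂ * β₂ + 2) / ϱ),
    lt_of_lt_of_le (by linarith) (le_max_left _ _), 1, one_pos, ?_⟩
  intro ρ hρ v hv hvb
  have h1 : 2 * β₂ + 1 ≤ max (2 * β₂ + 1) ((N : ℝ) * (4 * M₂ * β₂ + 2) / ϱ) :=
    le_max_left _ _
  have h2 : 2 * β₂ < ρ := by linarith
  have hmain := aux_main N hN f hf β₁ β₂ hβ₁ hβ₁₂ ρ h2 v hv hvb
  refine lt_of_lt_of_le ?_ hmain
  have hρ1 : 1 ≤ ρ := by linarith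
  have hρpow : (1:ℝ) ≤ ρ ^ (N - 1) := one_le_pow₀ hρ1
  have hΔle : ρ ^ N - (ρ - 2 * β₂) ^ N ≤ (N : ℝ) * ρ ^ (N - 1) * (2 * β₂) := by
    calc ρ ^ N - (ρ - 2 * β₂) ^ N
        ≤ (N : ℝ) * ρ ^ (N - 1) * (ρ - (ρ - 2 * β₂)) :=
          my_pow_sub_pow_le (by linarith) (by linarith) N
      _ = (N : ℝ) * ρ ^ (N - 1) * (2 * β₂) := by ring
  have h5 : (N : ℝ) * (4 * M₂ * β₂ + 2) < ρ * ϱ := by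
    have hlt : (N : ℝ) * (4 * M₂ * β₂ + 2) / ϱ < ρ :=
      lt_of_le_of_lt (le_max_right _ _) hρ
    exact (div_lt_iff₀ hϱ).mp hlt
  have e2 : 2 * M₂ * (ρ ^ N - (ρ - 2 * β₂) ^ N)
      ≤ 2 * M₂ * ((N : ℝ) * ρ ^ (N - 1) * (2 * β₂)) :=
    mul_le_mul_of_nonneg_left hΔle (by positivity)
  have hpowId : ρ ^ N = ρ ^ (N - 1) * ρ := by rw [← pow_succ, hNn]
  have key : (N : ℝ) < ϱ * ρ ^ N - 2 * M₂ * (ρ ^ N - (ρ - 2 * β₂) ^ N) := by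
    rw [hpowId]
    nlinarith [mul_lt_mul_of_pos_right h5 (lt_of_lt_of_le one_pos hρpow),
      mul_le_mul_of_nonneg_left hρpow hN0.le, e2]
  calc (1:ℝ) < (ϱ * ρ ^ N - 2 * M₂ * (ρ ^ N - (ρ - 2 * β₂) ^ N)) / N :=
        (one_lt_div hN0).mpr key
    _ = ϱ * ρ ^ N / N - 2 * M₂ * (ρ ^ N - (ρ - 2 * β₂) ^ N) / N := by ring
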